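/- arXiv:1607.07218 — 3 statements merged into one kernel-verified Lean document; each statement's English description precedes it below -/
import Mathlib

section
/- For x ∈ (0,1), the series f(x) = ∑_{k=1}^∞ (1/(2k-1)) * C(2k,k) * x^k * (1-x)^k satisfies f(x) ≤ 1, with equality if and only if x = 1/2. (Equivalently, f(x) = 1 - |1-2x| = 1 - √(1-4x(1-x)).) -/
/-!
With `t = x (1 - x)` the `k`-th term is `C(2k+2, k+1) t^(k+1) / (2k+1)`, increasing in `t ≥ 0`,
and `t ≤ 1/4` with equality exactly at `x = 1/2`. At `t = 1/4` the series telescopes: with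
`a n = C(2n, n) / 4^n` one has `a (n + 1) = (2n + 1) / (2n + 2) * a n`, so the `k`-th term is
`a k - a (k + 1)` and the partial sums are `1 - a n`. Since `a n ^ 2 * (2n + 1)` is nonincreasing,
`a n → 0` and the sum is `1`; for `t < 1/4` already the first term is strictly smaller.
-/

open Filter Topology Finset

noncomputable def centralBinomRatio (n : ℕ) : ℝ := n.centralBinom / 4 ^ n

lemma centralBinomRatio_nonneg (n : ℕ) : 0 ≤ centralBinomRatio n := by
  unfold centralBinomRatio
  positivity

lemma centralBinomRatio_succ (n : ℕ) :
    centralBinomRatio (n + 1) = (2 * n + 1) / (2 * n + 2) * centralBinomRatio n := by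
  have h : ((n : ℝ) + 1) * (n + 1).centralBinom = 2 * (2 * n + 1) * n.centralBinom := by
    exact_mod_cast Nat.succ_mul_centralBinom_succ n
  unfold centralBinomRatio
  field_simp
  rw [pow_succ]
  linear_combination 2 * 4 ^ n * h

lemma sq_centralBinomRatio_mul_le_one (n : ℕ) : centralBinomRatio n ^ 2 * (2 * n + 1) ≤ 1 := by
  induction n with
  | zero => simp [centralBinomRatio]
  | succ n ih =>
    rw [centralBinomRatio_succ]
    have hstep : ((2 * n + 1) / (2 * n + 2) : ℝ) ^ 2 * (2 * (n + 1 : ℕ) + 1) ≤ 2 * n + 1 := by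
      push_cast
      rw [div_pow, div_mul_eq_mul_div, div_le_iff₀ (by positivity)]
      nlinarith
    calc ((2 * n + 1) / (2 * n + 2) * centralBinomRatio n) ^ 2 * (2 * (n + 1 : ℕ) + 1)
        = ((2 * n + 1) / (2 * n + 2) : ℝ) ^ 2 * (2 * (n + 1 : ℕ) + 1) * centralBinomRatio n ^ 2 := by
          ring
      _ ≤ (2 * n + 1) * centralBinomRatio n ^ 2 := by gcongr
      _ ≤ 1 := by linarith

lemma tendsto_centralBinomRatio_atTop : Tendsto centralBinomRatio atTop (𝓝 0) := by
  have hsq : Tendsto (fun n ↦ centralBinomRatio n ^ 2) atTop (𝓝 0) := by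
    refine squeeze_zero (fun n ↦ sq_nonneg _) (fun n ↦ ?_)
      tendsto_one_div_add_atTop_nhds_zero_nat
    rw [le_div_iff₀ (by positivity)]
    nlinarith [sq_centralBinomRatio_mul_le_one n, sq_nonneg (centralBinomRatio n)]
  simpa [Real.sqrt_sq (centralBinomRatio_nonneg _)] using hsq.sqrt

noncomputable def returnTerm (t : ℝ) (k : ℕ) : ℝ := (k + 1).centralBinom / (2 * k + 1) * t ^ (k + 1)

lemma returnTerm_nonneg {t : ℝ} (ht : 0 ≤ t) (k : ℕ) : 0 ≤ returnTerm t k := by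
  unfold returnTerm
  positivity

lemma returnTerm_le_returnTerm {s t : ℝ} (hs : 0 ≤ s) (hst : s ≤ t) (k : ℕ) :
    returnTerm s k ≤ returnTerm t k := by
  unfold returnTerm
  gcongr

lemma returnTerm_quarter (k : ℕ) :
    returnTerm (1 / 4) k = centralBinomRatio k - centralBinomRatio (k + 1) := by
  have h : returnTerm (1 / 4) k = centralBinomRatio (k + 1) / (2 * k + 1) := by
    rw [returnTerm, centralBinomRatio, one_div_pow]
    ring
  rw [h, centralBinomRatio_succ]
  field_simp
  ring

lemma hasSum_returnTerm_quarter : HasSum (returnTerm (1 / 4)) 1 := by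
  rw [hasSum_iff_tendsto_nat_of_nonneg (returnTerm_nonneg (by norm_num))]
  simp_rw [returnTerm_quarter, sum_range_sub']
  simpa [centralBinomRatio] using tendsto_centralBinomRatio_atTop.const_sub (1 : ℝ)

lemma tsum_returnTerm_lt_one {t : ℝ} (ht : 0 ≤ t) (ht' : t < 1 / 4) :
    ∑' k, returnTerm t k < 1 := by
  have hle : ∀ k, returnTerm t k ≤ returnTerm (1 / 4) k :=
    returnTerm_le_returnTerm ht ht'.le
  have hlt : returnTerm t 0 < returnTerm (1 / 4) 0 := by
    norm_num [returnTerm, Nat.centralBinom_eq_two_mul_choose, Nat.choose]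
    linarith
  have hsum := hasSum_returnTerm_quarter
  rw [← hsum.tsum_eq]
  exact (hsum.summable.of_nonneg_of_le (returnTerm_nonneg ht) hle).tsum_lt_tsum hle hlt
    hsum.summable

theorem biased_return_series_le_one (x : ℝ) (hx : x ∈ Set.Ioo (0 : ℝ) 1) :
    (∑' k : ℕ, (1 / (2 * (k + 1 : ℝ) - 1)) * (Nat.choose (2 * (k + 1)) (k + 1)) *
        x ^ (k + 1) * (1 - x) ^ (k + 1)) ≤ 1 ∧
    ((∑' k : ℕ, (1 / (2 * (k + 1 : ℝ) - 1)) * (Nat.choose (2 * (k + 1)) (k + 1)) *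
        x ^ (k + 1) * (1 - x) ^ (k + 1)) = 1 ↔ x = 1 / 2) := by
  have hterm : (fun k : ℕ ↦ (1 / (2 * (k + 1 : ℝ) - 1)) * (Nat.choose (2 * (k + 1)) (k + 1)) *
      x ^ (k + 1) * (1 - x) ^ (k + 1)) = returnTerm (x * (1 - x)) := by
    funext k
    rw [returnTerm, Nat.centralBinom_eq_two_mul_choose, mul_pow]
    ring
  rw [hterm]
  rcases eq_or_ne x (1 / 2) with rfl | hne
  · norm_num [hasSum_returnTerm_quarter.tsum_eq]
  · have ht0 : 0 ≤ x * (1 - x) := mul_nonneg hx.1.le (sub_nonneg.2 hx.2.le)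
    have ht : x * (1 - x) < 1 / 4 := by
      nlinarith [sq_pos_of_ne_zero (sub_ne_zero.2 hne)]
    have hlt := tsum_returnTerm_lt_one ht0 ht
    exact ⟨hlt.le, iff_of_false hlt.ne hne⟩
end

section
/- Let L, R be n×n complex normal matrices with L*L + R*R = I. Then for every n×n matrix X, Tr(L R X R* L*) = Tr(R L X L* R*). -/
open Matrix

/-! Since `Tr(A X Aᴴ) = Tr(Aᴴ A X)`, it suffices that `Rᴴ (Lᴴ L) R = Lᴴ (Rᴴ R) L`. By normality,
`Rᴴ (Rᴴ R) R = (Rᴴ R)²`, so with `p = Lᴴ L = 1 - Rᴴ R` both sides equal `p - p²`. -/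

theorem IsStarNormal.star_mul_star_mul_self_mul {R : Type*} [Monoid R] [Star R] {a : R}
    [ha : IsStarNormal a] : star a * (star a * a) * a = (star a * a) * (star a * a) := by
  calc star a * (star a * a) * a = star a * (a * star a) * a := by rw [ha.star_comm_self.eq]
    _ = (star a * a) * (star a * a) := by simp only [mul_assoc]

theorem star_mul_star_mul_self_mul_eq_of_add_eq_one {R : Type*} [Ring R] [Star R]
    {a b : R} [IsStarNormal a] [IsStarNormal b] (h : star a * a + star b * b = 1) :
    star b * (star a * a) * b = star a * (star b * b) * a := by
  have ha : star a * a = 1 - star b * b := eq_sub_of_add_eq h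
  have hb : star b * b = 1 - star a * a := eq_sub_of_add_eq' h
  calc star b * (star a * a) * b
      = star b * b - (star b * b) * (star b * b) := by
        rw [← IsStarNormal.star_mul_star_mul_self_mul, ha]; noncomm_ring
    _ = star a * a - (star a * a) * (star a * a) := by rw [hb]; noncomm_ring
    _ = star a * (star b * b) * a := by
        rw [← IsStarNormal.star_mul_star_mul_self_mul, hb]; noncomm_ring

theorem Matrix.trace_mul_mul_conjTranspose {m n R : Type*} [Fintype m] [Fintype n]
    [NonUnitalCommSemiring R] [Star R] (A : Matrix m n R) (X : Matrix n n R) :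
    (A * X * Aᴴ).trace = (Aᴴ * A * X).trace := by
  rw [trace_mul_cycle]

theorem trace_LRXRL_eq_trace_RLXLR (n : ℕ) (L R X : Matrix (Fin n) (Fin n) ℂ)
    (h : Lᴴ * L + Rᴴ * R = 1) (hL : L * Lᴴ = Lᴴ * L) (hR : R * Rᴴ = Rᴴ * R) :
    (L * R * X * Rᴴ * Lᴴ).trace = (R * L * X * Lᴴ * Rᴴ).trace := by
  have : IsStarNormal L := ⟨hL.symm⟩
  have : IsStarNormal R := ⟨hR.symm⟩
  have key : Rᴴ * (Lᴴ * L) * R = Lᴴ * (Rᴴ * R) * L :=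
    star_mul_star_mul_self_mul_eq_of_add_eq_one h
  calc (L * R * X * Rᴴ * Lᴴ).trace
      = ((L * R) * X * (L * R)ᴴ).trace := by simp only [conjTranspose_mul, mul_assoc]
    _ = (Rᴴ * (Lᴴ * L) * R * X).trace := by
        rw [trace_mul_mul_conjTranspose, conjTranspose_mul]; simp only [mul_assoc]
    _ = (Lᴴ * (Rᴴ * R) * L * X).trace := by rw [key]
    _ = ((R * L) * X * (R * L)ᴴ).trace := by
        rw [trace_mul_mul_conjTranspose, conjTranspose_mul]; simp only [mul_assoc]
    _ = (R * L * X * Lᴴ * Rᴴ).trace := by simp only [conjTranspose_mul, mul_assoc]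
end

section
/- Let L, R be 2×2 complex normal matrices with L*L + R*R = I, diagonalized simultaneously as L*L = U diag(λ, μ) U* and R*R = U diag(1-λ, 1-μ) U* for a unitary U and 0 ≤ λ, μ ≤ 1. Then for any sequence of nonnegative integers l_1, r_1, ..., l_m, r_m with ∑ l_i = ∑ r_i = r and any 2×2 matrix X with (U* X U)_{11} = x_{11} and Tr(X)=1, Tr(L^{l_1} R^{r_1} ⋯ L^{l_m} R^{r_m} X (L^{l_1} R^{r_1} ⋯ L^{l_m} R^{r_m})*) = λ^r (1-λ)^r x_{11} + μ^r (1-μ)^r (1 - x_{11}). -/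
open Matrix

/-!
Since `L` and `R` are normal, `Lᴴ L` commutes with `L` and `Rᴴ R` with `R`; as the two sum to `1`,
both commute with `L` and `R`, hence with every word in `L` and `R`. Peeling the word `A` from the left therefore gives
`Aᴴ A = (Lᴴ L)^r (Rᴴ R)^r = U diag(λ^r (1-λ)^r, μ^r (1-μ)^r) Uᴴ`, and
`Tr(A X Aᴴ) = Tr(Aᴴ A X)` is read off from the diagonal of `Uᴴ X U`, whose trace is `Tr X = 1`.
-/

section StarMonoid

variable {M : Type*} [Monoid M] [StarMul M]

lemma star_mul_mul_self_of_commute {a b : M} (h : Commute (star a * a) b) :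
    star (a * b) * (a * b) = star a * a * (star b * b) := by
  have h' : Commute (star a * a) (star b) := by simpa using h.star_star
  calc star (a * b) * (a * b) = star b * (star a * a) * b := by simp only [star_mul, mul_assoc]
    _ = star a * a * (star b * b) := by rw [← h'.eq, mul_assoc]

lemma IsStarNormal.star_pow_mul_pow {a : M} [IsStarNormal a] (n : ℕ) :
    star (a ^ n) * a ^ n = (star a * a) ^ n := by
  rw [star_pow, (star_comm_self : Commute (star a) a).mul_pow]

lemma IsStarNormal.commute_star_mul_self {a : M} [IsStarNormal a] : Commute (star a * a) a :=
  star_comm_self.mul_left (Commute.refl a)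

lemma star_list_prod_mul_list_prod {a b : M} [IsStarNormal a] [IsStarNormal b]
    (hab : Commute (star a * a) b) (hba : Commute (star b * b) a) (ps : List (ℕ × ℕ)) :
    star (ps.map fun p => a ^ p.1 * b ^ p.2).prod * (ps.map fun p => a ^ p.1 * b ^ p.2).prod
      = (star a * a) ^ (ps.map Prod.fst).sum * (star b * b) ^ (ps.map Prod.snd).sum := by
  have hnorms : Commute (star a * a) (star b * b) :=
    (by simpa using hab.star_star : Commute (star a * a) (star b)).mul_right hab
  have hfactor (p : ℕ × ℕ) :
      star (a ^ p.1 * b ^ p.2) * (a ^ p.1 * b ^ p.2) = (star a * a) ^ p.1 * (star b * b) ^ p.2 := by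
    rw [star_mul_mul_self_of_commute (by rw [IsStarNormal.star_pow_mul_pow]; exact hab.pow_pow _ _),
      IsStarNormal.star_pow_mul_pow, IsStarNormal.star_pow_mul_pow]
  have hcomm (p q : ℕ × ℕ) :
      Commute ((star a * a) ^ p.1 * (star b * b) ^ p.2) (a ^ q.1 * b ^ q.2) := by
    refine Commute.mul_left ?_ ?_ <;> refine Commute.mul_right ?_ ?_ <;> apply Commute.pow_pow
    exacts [IsStarNormal.commute_star_mul_self, hab, hba, IsStarNormal.commute_star_mul_self]
  induction ps with
  | nil => simp
  | cons p ps ih =>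
    simp only [List.map_cons, List.prod_cons, List.sum_cons]
    rw [star_mul_mul_self_of_commute, ih, hfactor, pow_add, pow_add]
    · simp only [mul_assoc]
      rw [← mul_assoc ((star b * b) ^ p.2), ← (hnorms.pow_pow _ _).eq, mul_assoc]
    · rw [hfactor]
      exact Commute.list_prod_right _ _ fun x hx => by
        obtain ⟨q, -, rfl⟩ := List.mem_map.1 hx
        exact hcomm p q

end StarMonoid

lemma commute_star_mul_self_of_add_eq_one {M : Type*} [Ring M] [StarMul M] {a b : M}
    [IsStarNormal a] (h : star a * a + star b * b = 1) : Commute (star b * b) a := by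
  rw [eq_sub_of_add_eq' h]
  exact (Commute.one_left a).sub_left IsStarNormal.commute_star_mul_self

lemma Matrix.trace_conj_diagonal_mul {n R : Type*} [Fintype n] [DecidableEq n] [CommSemiring R]
    (U V X : Matrix n n R) (d : n → R) :
    (U * diagonal d * V * X).trace = ∑ i, d i * (V * X * U) i i := by
  rw [mul_assoc, mul_assoc, trace_mul_comm, mul_assoc, ← mul_assoc]
  simp only [trace, mul_assoc, diag_apply, diagonal_mul]

theorem trace_path_product_normal_general
    (L R X U : Matrix (Fin 2) (Fin 2) ℂ) (lam mu : ℝ)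
    (hL : L * Lᴴ = Lᴴ * L) (hR : R * Rᴴ = Rᴴ * R)
    (hsum : Lᴴ * L + Rᴴ * R = 1)
    (hU : U * Uᴴ = 1) (hU' : Uᴴ * U = 1)
    (hdiagL : Lᴴ * L = U * Matrix.diagonal ![(lam : ℂ), (mu : ℂ)] * Uᴴ)
    (hdiagR : Rᴴ * R = U * Matrix.diagonal ![(1 - lam : ℂ), (1 - mu : ℂ)] * Uᴴ)
    (hX : X.trace = 1)
    (ps : List (ℕ × ℕ)) (r : ℕ)
    (hl : (ps.map Prod.fst).sum = r) (hr : (ps.map Prod.snd).sum = r) :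
    let A := (ps.map (fun p => L ^ p.1 * R ^ p.2)).prod
    let x11 := (Uᴴ * X * U) 0 0
    (A * X * Aᴴ).trace
      = (lam : ℂ) ^ r * (1 - lam) ^ r * x11 + (mu : ℂ) ^ r * (1 - mu) ^ r * (1 - x11) := by
  intro A x11
  have : IsStarNormal L := ⟨hL.symm⟩
  have : IsStarNormal R := ⟨hR.symm⟩
  have hconj (D : Matrix (Fin 2) (Fin 2) ℂ) (n : ℕ) : (U * D * Uᴴ) ^ n = U * D ^ n * Uᴴ :=
    Units.conj_pow ⟨U, Uᴴ, hU, hU'⟩ D n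
  have hAA : Aᴴ * A
      = U * diagonal ![(lam : ℂ) ^ r * (1 - lam) ^ r, (mu : ℂ) ^ r * (1 - mu) ^ r] * Uᴴ := by
    calc Aᴴ * A = (Lᴴ * L) ^ r * (Rᴴ * R) ^ r := by
          simpa only [hl, hr, star_eq_conjTranspose] using star_list_prod_mul_list_prod
            (commute_star_mul_self_of_add_eq_one ((add_comm _ _).trans hsum))
            (commute_star_mul_self_of_add_eq_one hsum) ps
      _ = U * (diagonal ![(lam : ℂ), mu] ^ r * (Uᴴ * U) * diagonal ![1 - (lam : ℂ), 1 - mu] ^ r)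
            * Uᴴ := by
          rw [hdiagL, hdiagR, hconj, hconj]
          simp only [mul_assoc]
      _ = _ := by
          rw [hU', mul_one, diagonal_pow, diagonal_pow, diagonal_mul_diagonal]
          congr 2
          ext i
          fin_cases i <;> rfl
  have hY : (Uᴴ * X * U) 1 1 = 1 - x11 := by
    have h : (Uᴴ * X * U).trace = 1 := by rw [trace_mul_cycle, hU, one_mul, hX]
    rw [trace_fin_two] at h
    exact eq_sub_of_add_eq' h
  rw [trace_mul_cycle, hAA, trace_conj_diagonal_mul, Fin.sum_univ_two, hY]
  rfl

theorem trace_path_product_normal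
    (L R X U : Matrix (Fin 2) (Fin 2) ℂ) (lam mu : ℝ)
    (hL : L * Lᴴ = Lᴴ * L) (hR : R * Rᴴ = Rᴴ * R)
    (hsum : Lᴴ * L + Rᴴ * R = 1)
    (hU : U * Uᴴ = 1) (hU' : Uᴴ * U = 1)
    (hlam : 0 ≤ lam ∧ lam ≤ 1) (hmu : 0 ≤ mu ∧ mu ≤ 1)
    (hdiagL : Lᴴ * L = U * Matrix.diagonal ![(lam : ℂ), (mu : ℂ)] * Uᴴ)
    (hdiagR : Rᴴ * R = U * Matrix.diagonal ![(1 - lam : ℂ), (1 - mu : ℂ)] * Uᴴ)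
    (hX : X.trace = 1)
    (ps : List (ℕ × ℕ)) (r : ℕ)
    (hl : (ps.map Prod.fst).sum = r) (hr : (ps.map Prod.snd).sum = r) :
    let A := (ps.map (fun p => L ^ p.1 * R ^ p.2)).prod
    let x11 := (Uᴴ * X * U) 0 0
    (A * X * Aᴴ).trace
      = (lam : ℂ) ^ r * (1 - lam) ^ r * x11 + (mu : ℂ) ^ r * (1 - mu) ^ r * (1 - x11) :=
  trace_path_product_normal_general L R X U lam mu hL hR hsum hU hU' hdiagL hdiagR hX ps r hl hr
end
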